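/- arXiv:2605.14547 — 6 statements merged into one kernel-verified Lean document; each statement's English description precedes it below -/
import Mathlib

section
/- If G is a triangle-free graph, then its Mycielskian M(G) is also triangle-free. -/
open SimpleGraph

/-- The Mycielskian of a graph `G` on vertex set `V`: vertices are the old
vertices (`inl a` playing the role of `v_a`), the shadow vertices
(`inr (inl a)` playing the role of `u_a`) and the apex `inr (inr ())` = `w`. -/
def Mycielskian {V : Type} (G : SimpleGraph V) : SimpleGraph (V ⊕ V ⊕ Unit) :=
  SimpleGraph.fromRel (fun x y =>
    match x, y with
    | Sum.inl a, Sum.inl b => G.Adj a b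
    | Sum.inl a, Sum.inr (Sum.inl b) => G.Adj a b
    | Sum.inr (Sum.inl _), Sum.inr (Sum.inr _) => True
    | _, _ => False)


/-- If `G` is a triangle-free graph, then its Mycielskian `M(G)` is also
triangle-free. -/
theorem mycielskian_cliqueFree_three {V : Type} (G : SimpleGraph V)
    (hG : G.CliqueFree 3) : (Mycielskian G).CliqueFree 3 := by
  classical
  have noTri : ∀ x y z : V, G.Adj x y → G.Adj x z → G.Adj y z → False := by
    intro x y z h1 h2 h3
    exact hG {x, y, z} (SimpleGraph.is3Clique_iff.mpr ⟨x, y, z, h1, h2, h3, rfl⟩)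
  intro t ht
  obtain ⟨a, b, c, hab, hac, hbc, rfl⟩ := SimpleGraph.is3Clique_iff.mp ht
  rcases a with a | a | a <;> rcases b with b | b | b <;> rcases c with c | c | c <;>
    simp [Mycielskian, SimpleGraph.fromRel_adj] at hab hac hbc <;>
    first
      | exact noTri a b c (hab.2.elim id (fun h => G.adj_symm h))
          (hac.2.elim id (fun h => G.adj_symm h)) (hbc.2.elim id (fun h => G.adj_symm h))
      | exact noTri a b c (hab.2.elim id (fun h => G.adj_symm h)) hac hbc
      | exact noTri a b c hab (hac.2.elim id (fun h => G.adj_symm h)) (G.adj_symm hbc)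
      | exact noTri a b c (G.adj_symm hab) (G.adj_symm hac)
          (hbc.2.elim id (fun h => G.adj_symm h))
end

section
/- If G is a graph with chromatic number q ≥ 2, then the Mycielskian M(G) has chromatic number exactly q + 1. -/
/-! A `q`-coloring of `G` extends to `M(G)` by giving `u_a` the color of `v_a` and `w` a new
color. Conversely, if `M(G)` is properly colored and `k` is the color of `w`, recoloring every
`v_a` of color `k` with the color of `u_a` gives a proper coloring of `G` avoiding `k`: two
recolored vertices were adjacent of equal color `k`, and a recolored `v_a` next to a kept `v_b`
has the color of `u_a`, which is adjacent to `v_b`. -/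

open SimpleGraph

section Adjacency

variable {V : Type} {G : SimpleGraph V} {a b : V} {x y : Unit}

@[simp]
lemma mycielskian_adj_inl_inl : (Mycielskian G).Adj (.inl a) (.inl b) ↔ G.Adj a b := by
  simp +contextual [Mycielskian, G.adj_comm b a, G.ne_of_adj]

@[simp]
lemma mycielskian_adj_inl_shadow : (Mycielskian G).Adj (.inl a) (.inr (.inl b)) ↔ G.Adj a b := by
  simp [Mycielskian]

@[simp]
lemma mycielskian_adj_shadow_inl : (Mycielskian G).Adj (.inr (.inl a)) (.inl b) ↔ G.Adj b a := by
  simp [Mycielskian]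

@[simp]
lemma mycielskian_adj_shadow_apex : (Mycielskian G).Adj (.inr (.inl a)) (.inr (.inr x)) := by
  simp [Mycielskian]

@[simp]
lemma mycielskian_adj_apex_shadow : (Mycielskian G).Adj (.inr (.inr x)) (.inr (.inl a)) := by
  simp [Mycielskian]

@[simp]
lemma not_mycielskian_adj_inl_apex : ¬ (Mycielskian G).Adj (.inl a) (.inr (.inr x)) := by
  simp [Mycielskian]

@[simp]
lemma not_mycielskian_adj_apex_inl : ¬ (Mycielskian G).Adj (.inr (.inr x)) (.inl a) := by
  simp [Mycielskian]

@[simp]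
lemma not_mycielskian_adj_shadow_shadow :
    ¬ (Mycielskian G).Adj (.inr (.inl a)) (.inr (.inl b)) := by
  simp [Mycielskian]

@[simp]
lemma not_mycielskian_adj_apex_apex : ¬ (Mycielskian G).Adj (.inr (.inr x)) (.inr (.inr y)) := by
  simp [Mycielskian]

end Adjacency

namespace SimpleGraph

variable {V : Type} {G : SimpleGraph V} {α : Type*}

def Coloring.mycielskian (C : G.Coloring α) : (Mycielskian G).Coloring (Option α) :=
  Coloring.mk (fun | .inl a => some (C a) | .inr (.inl a) => some (C a) | .inr (.inr _) => none)
    (by rintro (a | a | _) (b | b | _) hab <;> simp at hab ⊢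
      <;> first | exact C.valid hab | exact (C.valid hab).symm)

def Coloring.ofMycielskian [DecidableEq α] (C : (Mycielskian G).Coloring α) :
    G.Coloring {k // k ≠ C (.inr (.inr ()))} :=
  Coloring.mk
    (fun a => if h : C (.inl a) = C (.inr (.inr ())) then ⟨C (.inr (.inl a)), C.valid (by simp)⟩
      else ⟨C (.inl a), h⟩)
    (by
      intro a b hab
      have hvv := C.valid (mycielskian_adj_inl_inl.mpr hab)
      split_ifs with ha hb hb <;> simp only [ne_eq, Subtype.mk.injEq]
      · exact (hvv (ha.trans hb.symm)).elim
      · exact C.valid (mycielskian_adj_shadow_inl.mpr hab.symm)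
      · exact C.valid (mycielskian_adj_inl_shadow.mpr hab)
      · exact hvv)

theorem Colorable.mycielskian {n : ℕ} (h : G.Colorable n) : (Mycielskian G).Colorable (n + 1) := by
  obtain ⟨C⟩ := h
  simpa using C.mycielskian.colorable

theorem Colorable.of_mycielskian {n : ℕ} (h : (Mycielskian G).Colorable (n + 1)) :
    G.Colorable n := by
  obtain ⟨C⟩ := h
  simpa [Fintype.card_subtype_compl] using C.ofMycielskian.colorable

end SimpleGraph

theorem chromaticNumber_mycielskian_eq_add_one {V : Type} (G : SimpleGraph V) :
    (Mycielskian G).chromaticNumber = G.chromaticNumber + 1 := by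
  apply le_antisymm
  · induction h : G.chromaticNumber using ENat.recTopCoe with
    | top => simp
    | coe n =>
      have hG : G.Colorable n := chromaticNumber_le_iff_colorable.mp h.le
      exact_mod_cast hG.mycielskian.chromaticNumber_le
  · induction h : (Mycielskian G).chromaticNumber using ENat.recTopCoe with
    | top => exact le_top
    | coe m =>
      have hM : (Mycielskian G).Colorable m := chromaticNumber_le_iff_colorable.mp h.le
      cases m with
      | zero => exact (colorable_zero_iff.mp hM).elim (.inr (.inr ()))
      | succ n =>
        push_cast
        gcongr
        exact hM.of_mycielskian.chromaticNumber_le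

theorem chromaticNumber_mycielskian_general {V : Type} (G : SimpleGraph V) (q : ℕ)
    (hχ : G.chromaticNumber = (q : ℕ∞)) :
    (Mycielskian G).chromaticNumber = ((q + 1 : ℕ) : ℕ∞) := by
  rw [chromaticNumber_mycielskian_eq_add_one, hχ]
  rfl

/-- If `G` is a graph with chromatic number `q ≥ 2`, then the Mycielskian `M(G)`
has chromatic number exactly `q + 1`. -/
theorem chromaticNumber_mycielskian {V : Type} (G : SimpleGraph V) (q : ℕ)
    (hq : 2 ≤ q) (hχ : G.chromaticNumber = (q : ℕ∞)) :
    (Mycielskian G).chromaticNumber = ((q + 1 : ℕ) : ℕ∞) :=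
  chromaticNumber_mycielskian_general G q hχ
end

section
/- For every integer r ≥ 2 there exists a connected triangle-free graph T_r with clique number 2 and chromatic number exactly r. -/
open SimpleGraph

/-- The Mycielskian of a graph. -/
def myc {V : Type} (G : SimpleGraph V) : SimpleGraph (V ⊕ V ⊕ Unit) where
  Adj x y := match x, y with
    | .inl a, .inl b => G.Adj a b
    | .inl a, .inr (.inl b) => G.Adj a b
    | .inr (.inl a), .inl b => G.Adj a b
    | .inr (.inl _), .inr (.inr _) => True
    | .inr (.inr _), .inr (.inl _) => True
    | _, _ => False
  symm := by constructor; rintro (a|a|a) (b|b|b) h <;> simp_all <;> exact h.symm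
  loopless := by constructor; rintro (a|a|a) h <;> simp_all

lemma myc_adj {V : Type} (G : SimpleGraph V) (a b : V) :
    (myc G).Adj (.inl a) (.inl b) ↔ G.Adj a b := Iff.rfl

lemma cliqueFree_three_iff {V : Type} (G : SimpleGraph V) :
    G.CliqueFree 3 ↔ ∀ a b c, G.Adj a b → G.Adj a c → G.Adj b c → False := by
  classical
  constructor
  · intro h a b c hab hac hbc
    exact h {a, b, c} (is3Clique_triple_iff.2 ⟨hab, hac, hbc⟩)
  · intro h s hs
    obtain ⟨a, b, c, hab, hac, hbc, rfl⟩ := is3Clique_iff.1 hs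
    exact h a b c hab hac hbc

lemma myc_cliqueFree {V : Type} (G : SimpleGraph V) (h : G.CliqueFree 3) :
    (myc G).CliqueFree 3 := by
  rw [cliqueFree_three_iff] at h ⊢
  rintro (a|a|a) (b|b|b) (c|c|c) hab hac hbc <;>
    simp only [myc, SimpleGraph.Adj] at hab hac hbc <;>
    first
      | exact hab | exact hac | exact hbc
      | exact h a b c hab hac hbc

lemma myc_connected {V : Type} (G : SimpleGraph V) [Nonempty V]
    (h : ∀ v : V, ∃ u, G.Adj v u) : (myc G).Connected := by
  have key : ∀ x : V ⊕ V ⊕ Unit, (myc G).Reachable x (.inr (.inr ())) := by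
    rintro (a|a|a)
    · obtain ⟨b, hb⟩ := h a
      have h1 : (myc G).Adj (.inl a) (.inr (.inl b)) := hb
      have h2 : (myc G).Adj (.inr (.inl b)) (.inr (.inr ())) := trivial
      exact h1.reachable.trans h2.reachable
    · exact (show (myc G).Adj (.inr (.inl a)) (.inr (.inr ())) from trivial).reachable
    · exact Reachable.refl _
  constructor
  · intro x y
    exact (key x).trans (key y).symm

lemma myc_colorable {V : Type} (G : SimpleGraph V) {n : ℕ} (h : G.Colorable n) :
    (myc G).Colorable (n + 1) := by
  obtain ⟨C⟩ := h
  refine ⟨Coloring.mk (fun x => match x with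
    | .inl a => (C a).castSucc
    | .inr (.inl a) => (C a).castSucc
    | .inr (.inr _) => Fin.last n) ?_⟩
  rintro (a|a|a) (b|b|b) hab <;>
    simp only [myc, SimpleGraph.Adj] at hab <;>
    first
      | exact hab.elim
      | exact fun hc => C.valid hab (Fin.castSucc_injective n hc)
      | exact (Fin.castSucc_lt_last _).ne
      | exact (Fin.castSucc_lt_last _).ne.symm

lemma myc_not_colorable {V : Type} (G : SimpleGraph V) {n : ℕ}
    (h : ¬ G.Colorable n) : ¬ (myc G).Colorable (n + 1) := by
  classical
  intro ⟨C⟩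
  apply h
  set a : Fin (n + 1) := C (.inr (.inr ())) with ha
  have hu : ∀ v : V, C (.inr (.inl v)) ≠ a := by
    intro v
    exact C.valid (show (myc G).Adj (.inr (.inl v)) (.inr (.inr ())) from trivial)
  set f : V → {x : Fin (n + 1) // x ≠ a} := fun v =>
    if hv : C (.inl v) = a then ⟨C (.inr (.inl v)), hu v⟩
    else ⟨C (.inl v), hv⟩ with hf
  have hvalid : ∀ {v w : V}, G.Adj v w → f v ≠ f w := by
    intro v w hvw
    by_cases h1 : C (.inl v) = a <;> by_cases h2 : C (.inl w) = a <;>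
      simp only [hf, h1, h2, dif_pos, dif_neg, not_false_iff, Ne, Subtype.mk.injEq]
    · exact absurd (h1.trans h2.symm) (C.valid (show (myc G).Adj (.inl v) (.inl w) from hvw))
    · exact C.valid (show (myc G).Adj (.inr (.inl v)) (.inl w) from hvw)
    · exact fun hc => (C.valid (show (myc G).Adj (.inl v) (.inr (.inl w)) from hvw)) hc
    · exact C.valid (show (myc G).Adj (.inl v) (.inl w) from hvw)
  have hcard : Fintype.card {x : Fin (n + 1) // x ≠ a} = n := by
    simp [Fintype.card_subtype_compl]
  exact hcard ▸ (Coloring.mk f hvalid).colorable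

lemma chromaticNumber_eq_of {V : Type} (G : SimpleGraph V) {r : ℕ} (hr : 1 ≤ r)
    (h1 : G.Colorable r) (h2 : ¬ G.Colorable (r - 1)) :
    G.chromaticNumber = (r : ℕ∞) := by
  refine le_antisymm (h1.chromaticNumber_le) ?_
  by_contra hlt
  push_neg at hlt
  have hcol' : G.Colorable (ENat.toNat G.chromaticNumber) :=
    G.colorable_of_chromaticNumber_ne_top hlt.ne_top
  apply h2
  apply hcol'.mono
  have hlt2 : ((ENat.toNat G.chromaticNumber : ℕ) : ℕ∞) < (r : ℕ∞) := by
    rwa [ENat.coe_toNat hlt.ne_top]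
  rw [Nat.cast_lt] at hlt2
  omega

/-- The inductive construction. -/
lemma myc_key (n : ℕ) : ∃ (V : Type) (_ : Fintype V) (T : SimpleGraph V),
    T.Connected ∧ T.CliqueFree 3 ∧ (∃ a b : V, T.Adj a b) ∧
    (∀ v : V, ∃ u, T.Adj v u) ∧ T.Colorable (n + 2) ∧ ¬ T.Colorable (n + 1) := by
  induction n with
  | zero =>
    refine ⟨Bool, inferInstance, ⊤, ?_, ?_, ⟨true, false, by simp⟩, ?_, ?_, ?_⟩
    · exact connected_top
    · intro s hs
      have := hs.card_eq
      have : s.card ≤ Fintype.card Bool := Finset.card_le_univ s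
      simp_all
    · intro v; exact ⟨!v, by simp⟩
    · exact ⟨Coloring.mk (fun b => if b then 0 else 1) (by decide)⟩
    · rintro ⟨C⟩
      exact C.valid (show (⊤ : SimpleGraph Bool).Adj true false by simp)
        (Fin.ext (by omega))
  | succ n ih =>
    obtain ⟨V, _, T, hconn, hfree, ⟨a, b, hab⟩, hnbr, hcol, hncol⟩ := ih
    have : Nonempty V := ⟨a⟩
    refine ⟨V ⊕ V ⊕ Unit, inferInstance, myc T, myc_connected T hnbr,
      myc_cliqueFree T hfree, ⟨.inl a, .inl b, hab⟩, ?_, myc_colorable T hcol,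
      myc_not_colorable T hncol⟩
    rintro (v|v|v)
    · obtain ⟨u, hu⟩ := hnbr v
      exact ⟨.inl u, hu⟩
    · exact ⟨.inr (.inr ()), trivial⟩
    · exact ⟨.inr (.inl a), trivial⟩

/-- For every integer `r ≥ 2` there exists a connected triangle-free graph `T_r`
with clique number `2` and chromatic number exactly `r`. -/
theorem exists_connected_triangleFree_chromatic (r : ℕ) (hr : 2 ≤ r) :
    ∃ (V : Type) (T : SimpleGraph V), T.Connected ∧ T.CliqueFree 3 ∧
      T.cliqueNum = 2 ∧ T.chromaticNumber = (r : ℕ∞) := by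
  classical
  obtain ⟨V, _, T, hconn, hfree, ⟨a, b, hab⟩, _, hcol, hncol⟩ := myc_key (r - 2)
  have h2 : r - 2 + 2 = r := by omega
  have h1 : r - 2 + 1 = r - 1 := by omega
  rw [h2] at hcol; rw [h1] at hncol
  refine ⟨V, T, hconn, hfree, ?_, chromaticNumber_eq_of T (by omega) hcol hncol⟩
  refine le_antisymm ?_ ?_
  · by_contra h
    push_neg at h
    have h3 : 3 ≤ T.cliqueNum := h
    obtain ⟨s, hs⟩ := T.exists_isNClique_cliqueNum
    exact hfree.mono h3 s hs
  · have hclique : T.IsNClique 2 {a, b} := by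
      rw [isNClique_iff]
      constructor
      · intro x hx y hy hxy
        simp only [Finset.coe_insert, Finset.coe_singleton, Set.mem_insert_iff,
          Set.mem_singleton_iff] at hx hy
        rcases hx with rfl | rfl <;> rcases hy with rfl | rfl <;>
          first | exact absurd rfl hxy | exact hab | exact hab.symm
      · rw [Finset.card_insert_of_notMem (by simp [hab.ne]), Finset.card_singleton]
    calc 2 = ({a, b} : Finset V).card := hclique.card_eq.symm
    _ ≤ T.cliqueNum := hclique.isClique.card_le_cliqueNum
end

section
/- The iterated Mycielski graphs T_r, defined by T_2 = K_2 and T_{r+1} = M(T_r), satisfy for all r ≥ 2: T_r is triangle-free, connected, ω(T_r) = 2, and χ(T_r) = r. -/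
open SimpleGraph

/-- The vertex types of the iterated Mycielski graphs, starting from `K_2`. -/
def TVert : ℕ → Type
  | 0 => Fin 2
  | n + 1 => TVert n ⊕ TVert n ⊕ Unit

/-- The iterated Mycielski graphs: `Tgraph 0 = K_2` and
`Tgraph (n+1) = M(Tgraph n)`, so `T_r = Tgraph (r - 2)` for `r ≥ 2`. -/
def Tgraph : (n : ℕ) → SimpleGraph (TVert n)
  | 0 => ⊤
  | n + 1 => Mycielskian (Tgraph n)



variable {V : Type} {G : SimpleGraph V}

@[simp] lemma adj_ll {a b : V} : (Mycielskian G).Adj (.inl a) (.inl b) ↔ G.Adj a b := by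
  simp only [Mycielskian, fromRel_adj]
  constructor
  · rintro ⟨-, h | h⟩
    · exact h
    · exact h.symm
  · intro h; exact ⟨by simpa using h.ne, Or.inl h⟩

@[simp] lemma adj_lu {a b : V} : (Mycielskian G).Adj (.inl a) (.inr (.inl b)) ↔ G.Adj a b := by
  simp only [Mycielskian, fromRel_adj]
  constructor
  · rintro ⟨-, h | h⟩
    · exact h
    · exact h.elim
  · intro h; exact ⟨by simp, Or.inl h⟩

@[simp] lemma adj_ul {a b : V} : (Mycielskian G).Adj (.inr (.inl a)) (.inl b) ↔ G.Adj b a := by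
  rw [adj_comm, adj_lu]

@[simp] lemma adj_uw {a : V} {u : Unit} : (Mycielskian G).Adj (.inr (.inl a)) (.inr (.inr u)) := by
  simp only [Mycielskian, fromRel_adj]
  exact ⟨by simp, Or.inl trivial⟩

@[simp] lemma adj_wu {a : V} {u : Unit} : (Mycielskian G).Adj (.inr (.inr u)) (.inr (.inl a)) :=
  adj_uw.symm

@[simp] lemma not_adj_lw {a : V} {u : Unit} : ¬ (Mycielskian G).Adj (.inl a) (.inr (.inr u)) := by
  simp only [Mycielskian, fromRel_adj]
  rintro ⟨-, h | h⟩ <;> exact h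

@[simp] lemma not_adj_wl {a : V} {u : Unit} : ¬ (Mycielskian G).Adj (.inr (.inr u)) (.inl a) :=
  fun h => not_adj_lw h.symm

@[simp] lemma not_adj_uu {a b : V} : ¬ (Mycielskian G).Adj (.inr (.inl a)) (.inr (.inl b)) := by
  simp only [Mycielskian, fromRel_adj]
  rintro ⟨-, h | h⟩ <;> exact h

@[simp] lemma not_adj_ww {u v : Unit} : ¬ (Mycielskian G).Adj (.inr (.inr u)) (.inr (.inr v)) := by
  simp only [Mycielskian, fromRel_adj]
  rintro ⟨-, h | h⟩ <;> exact h

lemma myc_cliqueFree_s16 (hG : G.CliqueFree 3) : (Mycielskian G).CliqueFree 3 := by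
  classical
  intro s hs
  rw [is3Clique_iff] at hs
  obtain ⟨x, y, z, hxy, hxz, hyz, -⟩ := hs
  have tri : ∀ a b c : V, G.Adj a b → G.Adj a c → G.Adj b c → False := by
    intro a b c h1 h2 h3
    exact hG {a, b, c} (is3Clique_triple_iff.2 ⟨h1, h2, h3⟩)
  rcases x with a | a | u <;> rcases y with b | b | u' <;> rcases z with c | c | u'' <;>
    simp only [adj_ll, adj_lu, adj_ul, not_adj_lw, not_adj_wl, not_adj_uu, not_adj_ww] at hxy hxz hyz
  · exact tri a b c hxy hxz hyz
  · exact tri a b c hxy hxz hyz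
  · exact tri a b c hxy hxz hyz.symm
  · exact tri a b c hxy.symm hxz.symm hyz

lemma exists_adj (hG : G.Connected) [Nontrivial V] (a : V) : ∃ b, G.Adj a b := by
  obtain ⟨c, hc⟩ := exists_ne a
  obtain ⟨p⟩ := hG.preconnected a c
  cases p with
  | nil => exact absurd rfl hc.symm
  | cons h _ => exact ⟨_, h⟩

lemma myc_connected_s16 (hG : G.Connected) [Nontrivial V] : (Mycielskian G).Connected := by
  rw [connected_iff_exists_forall_reachable]
  refine ⟨.inr (.inr ()), ?_⟩
  rintro (a | a | u)
  · obtain ⟨b, hb⟩ := exists_adj hG a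
    exact ((Adj.reachable (adj_lu.2 hb)).trans (Adj.reachable adj_uw)).symm
  · exact (Adj.reachable adj_wu)
  · rfl

lemma myc_colorable_up {n : ℕ} (h : G.Colorable n) : (Mycielskian G).Colorable (n + 1) := by
  obtain ⟨C⟩ := h
  refine ⟨Coloring.mk (fun x => match x with
    | Sum.inl a => (C a).castSucc
    | Sum.inr (Sum.inl a) => (C a).castSucc
    | Sum.inr (Sum.inr _) => Fin.last n) ?_⟩
  rintro (a | a | u) (b | b | u') h <;>
    simp only [adj_ll, adj_lu, adj_ul, adj_uw, adj_wu, not_adj_lw, not_adj_wl, not_adj_uu, not_adj_ww] at h <;>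
    simp only [Fin.castSucc_inj, ne_eq]
  · exact C.valid h
  · exact C.valid h
  · exact C.valid h.symm
  · exact (Fin.castSucc_lt_last _).ne
  · exact (Fin.castSucc_lt_last _).ne'

lemma myc_colorable_down {n : ℕ} (h : (Mycielskian G).Colorable (n + 1)) : G.Colorable n := by
  obtain ⟨C⟩ := h
  set w : V ⊕ V ⊕ Unit := Sum.inr (Sum.inr ()) with hw
  have key : ∀ a : V, C (Sum.inr (Sum.inl a)) ≠ C w := fun a => C.valid adj_uw
  let g : V → {x : Fin (n + 1) // ¬ x = C w} := fun a =>
    if h : C (Sum.inl a) = C w then ⟨C (Sum.inr (Sum.inl a)), key a⟩ else ⟨C (Sum.inl a), h⟩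
  have hvalid : ∀ a b : V, G.Adj a b → g a ≠ g b := by
    intro a b hab
    simp only [g]
    split_ifs with h1 h2 h2
    · exact absurd (h1.trans h2.symm) (C.valid (adj_ll.2 hab))
    · intro e
      exact C.valid (adj_ul.2 hab.symm) (congrArg Subtype.val e)
    · intro e
      exact C.valid (adj_lu.2 hab) (congrArg Subtype.val e)
    · intro e
      exact C.valid (adj_ll.2 hab) (congrArg Subtype.val e)
  have cardeq : Fintype.card {x : Fin (n + 1) // ¬ x = C w} = n := by
    rw [Fintype.card_subtype_compl, Fintype.card_subtype_eq, Fintype.card_fin]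
    omega
  exact cardeq ▸ (Coloring.mk g (fun {a b} => hvalid a b)).colorable

instance instFintypeTVert : ∀ n, Fintype (TVert n)
  | 0 => inferInstanceAs (Fintype (Fin 2))
  | n + 1 => letI := instFintypeTVert n
             inferInstanceAs (Fintype (TVert n ⊕ TVert n ⊕ Unit))

instance instNonemptyTVert : ∀ n, Nonempty (TVert n)
  | 0 => inferInstanceAs (Nonempty (Fin 2))
  | n + 1 => ⟨Sum.inr (Sum.inr ())⟩

instance instNontrivialTVert : ∀ n, Nontrivial (TVert n)
  | 0 => inferInstanceAs (Nontrivial (Fin 2))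
  | n + 1 => ⟨⟨Sum.inl (Classical.arbitrary (TVert n)), Sum.inr (Sum.inr ()), Sum.inl_ne_inr⟩⟩

lemma cliqueNum_eq_two {W : Type} [Fintype W] {H : SimpleGraph W} (h3 : H.CliqueFree 3)
    (he : ∃ a b, H.Adj a b) : H.cliqueNum = 2 := by
  classical
  obtain ⟨a, b, hab⟩ := he
  have hpair : H.IsNClique 2 {a, b} := by
    constructor
    · intro x hx y hy hxy
      simp only [Finset.coe_insert, Set.mem_insert_iff, Finset.coe_singleton,
        Set.mem_singleton_iff] at hx hy
      rcases hx with rfl | rfl <;> rcases hy with rfl | rfl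
      · exact absurd rfl hxy
      · exact hab
      · exact hab.symm
      · exact absurd rfl hxy
    · simp [Finset.card_insert_of_notMem, hab.ne]
  have h2 : 2 ≤ H.cliqueNum := by
    have h := IsClique.card_le_cliqueNum (tc := hpair.isClique)
    rwa [hpair.card_eq] at h
  have hlt : H.cliqueNum < 3 := by
    by_contra hc
    push_neg at hc
    obtain ⟨s, hs⟩ := H.exists_isNClique_cliqueNum
    exact h3.mono hc s hs
  omega

lemma tgraph_key (n : ℕ) : (Tgraph n).CliqueFree 3 ∧ (Tgraph n).Connected ∧
    (Tgraph n).chromaticNumber = ((n + 2 : ℕ) : ℕ∞) := by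
  induction n with
  | zero =>
    refine ⟨cliqueFree_of_card_lt (by decide), connected_top, ?_⟩
    have h := chromaticNumber_top (V := TVert 0)
    rw [show Tgraph 0 = ⊤ from rfl, h, show Fintype.card (TVert 0) = 2 from rfl]
  | succ n ih =>
    obtain ⟨h3, hc, hχ⟩ := ih
    refine ⟨myc_cliqueFree_s16 h3, myc_connected_s16 hc, ?_⟩
    have hcol : (Tgraph n).Colorable (n + 2) := chromaticNumber_le_iff_colorable.1 hχ.le
    have hup : (Tgraph (n + 1)).Colorable (n + 3) := myc_colorable_up hcol
    have hnot : ¬ (Tgraph (n + 1)).Colorable (n + 2) := by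
      intro h
      have hdown : (Tgraph n).Colorable (n + 1) := myc_colorable_down h
      have hle := hdown.chromaticNumber_le
      rw [hχ] at hle
      exact absurd (by exact_mod_cast hle) (by omega)
    apply le_antisymm
    · exact_mod_cast hup.chromaticNumber_le
    · have hgt : ((n + 2 : ℕ) : ℕ∞) < (Tgraph (n + 1)).chromaticNumber :=
        lt_of_not_ge fun hle => hnot (chromaticNumber_le_iff_colorable.1 hle)
      have h1 := Order.add_one_le_of_lt hgt
      exact_mod_cast h1

/-- For all `r ≥ 2`, the iterated Mycielski graph `T_r` is triangle-free,
connected, has clique number `2` and chromatic number exactly `r`. -/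
theorem iterated_mycielski_properties (r : ℕ) (hr : 2 ≤ r) :
    (Tgraph (r - 2)).CliqueFree 3 ∧ (Tgraph (r - 2)).Connected ∧
    (Tgraph (r - 2)).cliqueNum = 2 ∧
    (Tgraph (r - 2)).chromaticNumber = (r : ℕ∞) := by
  obtain ⟨n, rfl⟩ : ∃ n, r = n + 2 := ⟨r - 2, by omega⟩
  have hn : n + 2 - 2 = n := by omega
  rw [hn]
  obtain ⟨h3, hc, hχ⟩ := tgraph_key n
  refine ⟨h3, hc, ?_, hχ⟩
  obtain ⟨b, hb⟩ := exists_adj hc (Classical.arbitrary (TVert n))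
  exact cliqueNum_eq_two h3 ⟨_, b, hb⟩
end

section
/- If M(G) has a proper coloring with s colors and G has at least one edge, then G has a proper coloring with s − 1 colors; consequently χ(M(G)) ≥ χ(G) + 1. -/
open SimpleGraph

lemma myc_adj_ll {V : Type} {G : SimpleGraph V} {a b : V} (h : G.Adj a b) :
    (Mycielskian G).Adj (Sum.inl a) (Sum.inl b) := by
  refine ⟨by simp [h.ne], Or.inl h⟩

lemma myc_adj_lu {V : Type} {G : SimpleGraph V} {a b : V} (h : G.Adj a b) :
    (Mycielskian G).Adj (Sum.inl a) (Sum.inr (Sum.inl b)) := by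
  exact ⟨by simp, Or.inl h⟩

lemma myc_adj_uw {V : Type} {G : SimpleGraph V} (a : V) :
    (Mycielskian G).Adj (Sum.inr (Sum.inl a)) (Sum.inr (Sum.inr ())) := by
  exact ⟨by simp, Or.inl trivial⟩

lemma myc_colorable_sub {V : Type} (G : SimpleGraph V) (n : ℕ)
    (h : (Mycielskian G).Colorable n) : G.Colorable (n - 1) := by
  classical
  obtain ⟨C⟩ := h
  set w : V ⊕ V ⊕ Unit := Sum.inr (Sum.inr ()) with hw
  have huw : ∀ a : V, C (Sum.inr (Sum.inl a)) ≠ C w :=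
    fun a => C.valid (myc_adj_uw a)
  let f : V → {x : Fin n // x ≠ C w} := fun a =>
    if hc : C (Sum.inl a) = C w then ⟨C (Sum.inr (Sum.inl a)), huw a⟩
    else ⟨C (Sum.inl a), hc⟩
  have hproper : ∀ {a b : V}, G.Adj a b → f a ≠ f b := by
    intro a b hab
    have hll : C (Sum.inl a) ≠ C (Sum.inl b) := C.valid (myc_adj_ll hab)
    by_cases ha : C (Sum.inl a) = C w <;> by_cases hb : C (Sum.inl b) = C w
    · exact absurd (ha.trans hb.symm) hll
    · have : C (Sum.inr (Sum.inl a)) ≠ C (Sum.inl b) :=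
        fun hEq => C.valid (myc_adj_lu hab.symm) hEq.symm
      simp [f, ha, hb, Subtype.ext_iff, this]
    · have : C (Sum.inl a) ≠ C (Sum.inr (Sum.inl b)) := C.valid (myc_adj_lu hab)
      simp [f, ha, hb, Subtype.ext_iff, this]
    · simp [f, ha, hb, Subtype.ext_iff, hll]
  have Cg : G.Coloring {x : Fin n // x ≠ C w} := Coloring.mk f (fun h => hproper h)
  have := Cg.colorable
  have hcard : Fintype.card {x : Fin n // x ≠ C w} = n - 1 := by
    simp [Fintype.card_subtype_compl]
  rwa [hcard] at this

/-- If `M(G)` has a proper coloring with `s` colors and `G` has at least one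
edge, then `G` has a proper coloring with `s - 1` colors; consequently
`χ(M(G)) ≥ χ(G) + 1`. -/
theorem mycielskian_chromatic_lower {V : Type} (G : SimpleGraph V) (s : ℕ)
    (h : (Mycielskian G).Colorable s) (he : ∃ a b, G.Adj a b) :
    G.Colorable (s - 1) ∧
      G.chromaticNumber + 1 ≤ (Mycielskian G).chromaticNumber := by
  constructor
  · exact myc_colorable_sub G s h
  · set m : ℕ := ENat.toNat (Mycielskian G).chromaticNumber with hm
    have hcm : (Mycielskian G).Colorable m := colorable_chromaticNumber h
    have hfin : (Mycielskian G).chromaticNumber = (m : ℕ∞) := by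
      have := h.chromaticNumber_le
      exact (ENat.coe_toNat (by exact ne_top_of_le_ne_top (by simp) this)).symm
    have hm1 : 1 ≤ m := by
      by_contra hlt
      interval_cases m
      obtain ⟨C⟩ := hcm
      exact (C (Sum.inr (Sum.inr ()))).elim0
    have hG : G.Colorable (m - 1) := myc_colorable_sub G m hcm
    have hle : G.chromaticNumber ≤ ((m - 1 : ℕ) : ℕ∞) :=
      hG.chromaticNumber_le
    rw [hfin]
    calc G.chromaticNumber + 1 ≤ ((m - 1 : ℕ) : ℕ∞) + 1 := by
          exact add_le_add_left hle 1
      _ = ((m - 1 + 1 : ℕ) : ℕ∞) := by push_cast; ring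
      _ = (m : ℕ∞) := by rw [Nat.sub_add_cancel hm1]
end

section
/- Assume for every r ≥ 2 there exist graphs (X_{r,m})_{m≥1} such that ω(X_{r,m}) = r, χ(X_{r,m}) ≥ m, each X_{r,m} contains an induced subgraph with clique number 2 and chromatic number r, and the hereditary closure ℋ_r of {X_{r,m} : m ≥ 1} is (r−1)-good. Then the class 𝒞 = {X_{r,m} : r ≥ 2, m ≥ 1} is Pollyanna but, for every integer k ≥ 1, is not k-strongly Pollyanna; in particular 𝒞 is not strongly Pollyanna. -/
open SimpleGraph

/-- A class of graphs, with arbitrary vertex types, is a set of bundled graphs. -/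
abbrev GraphClass : Type 1 := Set (Σ V : Type, SimpleGraph V)

/-- `IndSub H G` means `H` is (isomorphic to) an induced subgraph of `G`. -/
def IndSub (H G : Σ V : Type, SimpleGraph V) : Prop := Nonempty (H.2 ↪g G.2)

/-- A class of graphs is hereditary if it is closed under induced subgraphs. -/
def Hereditary (𝒜 : GraphClass) : Prop := ∀ G ∈ 𝒜, ∀ H, IndSub H G → H ∈ 𝒜

/-- The hereditary closure of a class of graphs. -/
def Ind (𝒜 : GraphClass) : GraphClass := {H | ∃ G ∈ 𝒜, IndSub H G}

/-- A class is `χ`-bounded if some function of the clique number bounds the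
chromatic number of all induced subgraphs of its members. -/
def ChiBounded (ℱ : GraphClass) : Prop :=
  ∃ φ : ℕ → ℕ, ∀ G ∈ ℱ, ∀ H, IndSub H G →
    H.2.chromaticNumber ≤ (φ H.2.cliqueNum : ℕ∞)

/-- A class is polynomially `χ`-bounded if the bounding function can be taken
to be a polynomial. -/
def PolyChiBounded (ℱ : GraphClass) : Prop :=
  ∃ p : Polynomial ℕ, ∀ G ∈ ℱ, ∀ H, IndSub H G →
    H.2.chromaticNumber ≤ ((p.eval H.2.cliqueNum : ℕ) : ℕ∞)

/-- A hereditary class is `n`-good if the chromatic numbers of induced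
subgraphs with clique number at most `n` are uniformly bounded. -/
def NGood (n : ℕ) (ℱ : GraphClass) : Prop :=
  Hereditary ℱ ∧ ∃ c : ℕ, ∀ G ∈ ℱ, ∀ H, IndSub H G → H.2.cliqueNum ≤ n →
    H.2.chromaticNumber ≤ (c : ℕ∞)

/-- A class `𝒞` is Pollyanna if `𝒞 ∩ ℱ` is polynomially `χ`-bounded for every
`χ`-bounded class `ℱ`. -/
def Pollyanna (𝒞 : GraphClass) : Prop :=
  ∀ ℱ : GraphClass, ChiBounded ℱ → PolyChiBounded (𝒞 ∩ ℱ)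

/-- A class `𝒞` is `k`-strongly Pollyanna if `𝒞 ∩ ℱ` is polynomially
`χ`-bounded for every `k`-good class `ℱ`. -/
def KStronglyPollyanna (k : ℕ) (𝒞 : GraphClass) : Prop :=
  ∀ ℱ : GraphClass, NGood k ℱ → PolyChiBounded (𝒞 ∩ ℱ)

/-- A class is strongly Pollyanna if it is `k`-strongly Pollyanna for some
`k ≥ 1`. -/
def StronglyPollyanna (𝒞 : GraphClass) : Prop :=
  ∃ k : ℕ, 1 ≤ k ∧ KStronglyPollyanna k 𝒞

/-!
If `ℱ` is `χ`-bounded by `φ`, then every graph `G` of `𝒞 ∩ ℱ` contains a triangle-free induced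
subgraph of chromatic number `ω(G)`, so `ω(G) ≤ φ(2)`; hence `χ` is bounded by a constant on
`𝒞 ∩ ℱ`. On the other hand the graphs `X_{k+1,m}` lie in the `k`-good class `ℋ_{k+1}`, all have
clique number `k + 1` and have unbounded chromatic number, so no bound at all works there.
-/

namespace SimpleGraph

variable {V W : Type*} {G : SimpleGraph V} {H : SimpleGraph W}

-- `cliqueNum` is an `sSup` in `ℕ`, which is `0` on sets that are not bounded above.
lemma bddAbove_isNClique_of_cliqueNum_ne_zero (h : H.cliqueNum ≠ 0) :
    BddAbove {n | ∃ s, H.IsNClique n s} :=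
  not_not.1 fun hb => h (Nat.sSup_of_not_bddAbove hb)

lemma Embedding.cliqueNum_le (f : G ↪g H) (hH : H.cliqueNum ≠ 0) :
    G.cliqueNum ≤ H.cliqueNum := by
  refine csSup_le_csSup (bddAbove_isNClique_of_cliqueNum_ne_zero hH) ⟨0, ∅, by simp⟩ ?_
  rintro n ⟨s, hs⟩
  exact ⟨s.map f.toEmbedding,
    hs.map.mono ((map_le_iff_le_comap _ _ _).2 fun _ _ => f.map_adj_iff.2)⟩

end SimpleGraph

lemma IndSub.refl (G : Σ V : Type, SimpleGraph V) : IndSub G G :=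
  ⟨Embedding.refl⟩

lemma subset_ind (𝒜 : GraphClass) : 𝒜 ⊆ Ind 𝒜 :=
  fun G hG => ⟨G, hG, IndSub.refl G⟩

lemma PolyChiBounded.chiBounded {ℱ : GraphClass} (h : PolyChiBounded ℱ) : ChiBounded ℱ :=
  let ⟨p, hp⟩ := h
  ⟨fun n => p.eval n, hp⟩

lemma not_chiBounded_of_cliqueNum_eq_of_chromaticNumber_unbounded {ℱ : GraphClass} (r : ℕ)
    (h : ∀ N : ℕ, ∃ G ∈ ℱ, G.2.cliqueNum = r ∧ (N : ℕ∞) < G.2.chromaticNumber) :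
    ¬ ChiBounded ℱ := by
  rintro ⟨φ, hφ⟩
  obtain ⟨G, hG, hω, hχ⟩ := h (φ r)
  exact (hχ.trans_le (hω ▸ hφ G hG G (IndSub.refl G))).false

theorem pollyanna_of_exists_indSub_cliqueNum_two {𝒞 : GraphClass}
    (hω : ∀ G ∈ 𝒞, G.2.cliqueNum ≠ 0)
    (htag : ∀ G ∈ 𝒞, ∃ T, IndSub T G ∧ T.2.cliqueNum = 2 ∧
      (G.2.cliqueNum : ℕ∞) ≤ T.2.chromaticNumber) :
    Pollyanna 𝒞 := by
  rintro ℱ ⟨φ, hφ⟩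
  refine ⟨Polynomial.C ((Finset.range (φ 2 + 1)).sup φ), ?_⟩
  rintro G ⟨hG𝒞, hGℱ⟩ H ⟨f⟩
  obtain ⟨T, hT, hTω, hTχ⟩ := htag G hG𝒞
  have hGω : G.2.cliqueNum ≤ φ 2 := by
    exact_mod_cast hTχ.trans (hTω ▸ hφ G hGℱ T hT)
  have hHω : H.2.cliqueNum ≤ G.2.cliqueNum := f.cliqueNum_le (hω G hG𝒞)
  calc H.2.chromaticNumber ≤ φ H.2.cliqueNum := hφ G hGℱ H ⟨f⟩
    _ ≤ _ := by
      rw [Polynomial.eval_C, Nat.cast_le]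
      exact Finset.le_sup (Finset.mem_range.2 (by omega))

/-- Assume for every `r ≥ 2` there are graphs `X_{r,m}` (`m ≥ 1`) with
`ω(X_{r,m}) = r`, `χ(X_{r,m}) ≥ m`, each containing an induced subgraph with
clique number 2 and chromatic number `r`, and such that the hereditary closure
of `{X_{r,m} : m ≥ 1}` is `(r-1)`-good.  Then `𝒞 = {X_{r,m} : r ≥ 2, m ≥ 1}`
is Pollyanna but, for every `k ≥ 1`, not `k`-strongly Pollyanna; in particular
`𝒞` is not strongly Pollyanna. -/
theorem pollyanna_not_strongly_pollyanna
    (X : ℕ → ℕ → Σ V : Type, SimpleGraph V)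
    (hω : ∀ r : ℕ, 2 ≤ r → ∀ m : ℕ, 1 ≤ m → (X r m).2.cliqueNum = r)
    (hχ : ∀ r : ℕ, 2 ≤ r → ∀ m : ℕ, 1 ≤ m → (m : ℕ∞) ≤ (X r m).2.chromaticNumber)
    (htag : ∀ r : ℕ, 2 ≤ r → ∀ m : ℕ, 1 ≤ m → ∃ T, IndSub T (X r m) ∧
      T.2.cliqueNum = 2 ∧ T.2.chromaticNumber = (r : ℕ∞))
    (hgood : ∀ r : ℕ, 2 ≤ r → NGood (r - 1) (Ind {G | ∃ m : ℕ, 1 ≤ m ∧ G = X r m})) :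
    Pollyanna {G | ∃ r : ℕ, 2 ≤ r ∧ ∃ m : ℕ, 1 ≤ m ∧ G = X r m} ∧
    (∀ k, 1 ≤ k → ¬ KStronglyPollyanna k {G | ∃ r : ℕ, 2 ≤ r ∧ ∃ m : ℕ, 1 ≤ m ∧ G = X r m}) ∧
    ¬ StronglyPollyanna {G | ∃ r : ℕ, 2 ≤ r ∧ ∃ m : ℕ, 1 ≤ m ∧ G = X r m} := by
  set 𝒞 : GraphClass := {G | ∃ r : ℕ, 2 ≤ r ∧ ∃ m : ℕ, 1 ≤ m ∧ G = X r m}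
  have not_strongly : ∀ k, 1 ≤ k → ¬ KStronglyPollyanna k 𝒞 := by
    intro k hk hSP
    refine not_chiBounded_of_cliqueNum_eq_of_chromaticNumber_unbounded (k + 1) (fun N => ?_)
      (hSP _ (hgood (k + 1) (by omega))).chiBounded
    refine ⟨X (k + 1) (N + 1), ⟨⟨k + 1, by omega, N + 1, by omega, rfl⟩,
      subset_ind _ ⟨N + 1, by omega, rfl⟩⟩, hω _ (by omega) _ (by omega), ?_⟩
    exact (ENat.natCast_lt_natCast.2 N.lt_succ_self).trans_le (hχ _ (by omega) _ (by omega))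
  refine ⟨pollyanna_of_exists_indSub_cliqueNum_two ?_ ?_, not_strongly,
    fun ⟨k, hk, h⟩ => not_strongly k hk h⟩
  · rintro _ ⟨r, hr, m, hm, rfl⟩
    rw [hω r hr m hm]
    omega
  · rintro _ ⟨r, hr, m, hm, rfl⟩
    obtain ⟨T, hT, hTω, hTχ⟩ := htag r hr m hm
    exact ⟨T, hT, hTω, by rw [hω r hr m hm, hTχ]⟩
end
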